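/- For n < β < n+2 and fixed δ > 0, the Fourier multiplier has the asymptotic growth |m^{δ,β}(ν)| ~ C‖ν‖^{β−n} as ‖ν‖ → ∞ for some constant C = C(n, β, δ) > 0, whereas for β < n the multiplier m^{δ,β}(ν) remains bounded as ‖ν‖ → ∞. -/

import Mathlib

open MeasureTheory Metric Real Filter
open scoped RealInnerProductSpace Topology

/-- The Fourier multiplier `m^{δ,β}(ν)` with the standard normalization constant. -/
noncomputable def nonlocalMultiplierFn (n : ℕ) (δ β : ℝ)
    (ν : EuclideanSpace ℝ (Fin n)) : ℝ :=
  (2 * (n + 2 - β) * Real.Gamma ((n : ℝ) / 2 + 1) /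
      (Real.pi ^ ((n : ℝ) / 2) * δ ^ ((n : ℝ) + 2 - β))) *
    ∫ z in ball (0 : EuclideanSpace ℝ (Fin n)) δ,
      (Real.cos ⟪ν, z⟫ - 1) / ‖z‖ ^ β

/-!
Substituting `z = w / ‖ν‖` writes the integral over `B_δ` as `‖ν‖ ^ (β - n)` times the integral
of the same kernel with unit frequency `ν / ‖ν‖` over `B_{δ‖ν‖}`, and by rotation invariance the
direction of that unit frequency is irrelevant. For `n < β < n + 2` the kernel
`(cos ⟪e, z⟫ - 1) / ‖z‖ ^ β` is `O(‖z‖ ^ (2 - β))` at the origin and `O(‖z‖ ^ (-β))` at infinity,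
hence integrable on all of `ℝⁿ`, so the rescaled integrals converge to its integral, which is
strictly negative. For `β < n`, `2 ‖z‖ ^ (-β)` is an integrable majorant on `B_δ` uniformly in `ν`.
-/

open Set Module

section Radial

variable {E F : Type*} [NormedAddCommGroup E] [NormedSpace ℝ E] [FiniteDimensional ℝ E]
  [MeasurableSpace E] [BorelSpace E] [NormedAddCommGroup F]
  {μ : Measure E} [μ.IsAddHaarMeasure]

lemma integrableOn_compl_ball_of_norm_le_rpow {f : E → F} {C α r : ℝ} (hr : 0 < r)
    (hα : finrank ℝ E < α)
    (h_decay : ∀ᵐ x ∂μ.restrict (ball 0 r)ᶜ, ‖f x‖ ≤ C * ‖x‖ ^ (-α))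
    (h_meas : AEStronglyMeasurable f μ) :
    IntegrableOn f (ball 0 r)ᶜ μ := by
  have hα0 : 0 ≤ α := (Nat.cast_nonneg _).trans hα.le
  set K := (1 + r⁻¹) ^ α
  have hint : Integrable (fun x : E ↦ |C| * K * (1 + ‖x‖) ^ (-α)) μ :=
    (integrable_one_add_norm hα).const_mul _
  refine Integrable.mono' hint.integrableOn h_meas.restrict ?_
  rw [ae_restrict_iff' measurableSet_ball.compl] at h_decay ⊢
  filter_upwards [h_decay] with x hx hxr
  replace hx := hx hxr
  rw [mem_compl_iff, mem_ball_zero_iff, not_lt] at hxr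
  have hx0 : 0 < ‖x‖ := hr.trans_le hxr
  have hcomp : ‖x‖ ^ (-α) ≤ K * (1 + ‖x‖) ^ (-α) := by
    rw [rpow_neg hx0.le, rpow_neg (by positivity), ← inv_rpow hx0.le, ← div_eq_mul_inv,
      ← div_rpow (by positivity) (by positivity)]
    refine rpow_le_rpow (by positivity) ?_ hα0
    rw [inv_eq_one_div, div_le_div_iff₀ hx0 (by positivity)]
    have : 1 ≤ r⁻¹ * ‖x‖ := by rw [inv_mul_eq_div, one_le_div hr]; exact hxr
    linarith
  calc ‖f x‖ ≤ C * ‖x‖ ^ (-α) := hx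
    _ ≤ |C| * (K * (1 + ‖x‖) ^ (-α)) :=
      mul_le_mul (le_abs_self C) hcomp (by positivity) (abs_nonneg C)
    _ = |C| * K * (1 + ‖x‖) ^ (-α) := by ring

end Radial

lemma tendsto_setIntegral_ball_atTop {X G : Type*} [PseudoMetricSpace X] [MeasurableSpace X]
    [OpensMeasurableSpace X] [NormedAddCommGroup G] [NormedSpace ℝ G] {μ : Measure X}
    (x : X) {f : X → G} (hf : Integrable f μ) :
    Tendsto (fun R : ℝ ↦ ∫ z in ball x R, f z ∂μ) atTop (𝓝 (∫ z, f z ∂μ)) := by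
  have hU : (⋃ R : ℝ, ball x R) = univ := iUnion_eq_univ_iff.2 fun z ↦
    ⟨dist z x + 1, mem_ball.2 (lt_add_one _)⟩
  have := tendsto_setIntegral_of_monotone (μ := μ) (fun R ↦ measurableSet_ball (x := x) (ε := R))
    (fun _ _ h ↦ ball_subset_ball h) (by rw [hU]; exact hf.integrableOn)
  rwa [hU, setIntegral_univ] at this

lemma setIntegral_ball_comp_linearIsometryEquiv {E G : Type*} [NormedAddCommGroup E]
    [InnerProductSpace ℝ E] [FiniteDimensional ℝ E] [MeasurableSpace E] [BorelSpace E]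
    [NormedAddCommGroup G] [NormedSpace ℝ G] (f : E ≃ₗᵢ[ℝ] E) (g : E → G) (R : ℝ) :
    ∫ z in ball 0 R, g (f z) = ∫ z in ball 0 R, g z := by
  have := f.measurePreserving.setIntegral_preimage_emb f.toHomeomorph.measurableEmbedding g
    (ball 0 R)
  rwa [f.preimage_ball, map_zero] at this

section Kernel

variable {E : Type*} [NormedAddCommGroup E] [InnerProductSpace ℝ E]

noncomputable def multiplierKernel (β : ℝ) (ν z : E) : ℝ :=
  (cos ⟪ν, z⟫ - 1) / ‖z‖ ^ β

variable {β : ℝ}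

lemma measurable_multiplierKernel [MeasurableSpace E] [BorelSpace E] (β : ℝ) (ν : E) :
    Measurable (multiplierKernel β ν) :=
  ((continuous_cos.comp (continuous_const.inner continuous_id)).sub continuous_const).measurable.div
    (measurable_norm.pow_const β)

lemma multiplierKernel_nonpos (β : ℝ) (ν z : E) : multiplierKernel β ν z ≤ 0 :=
  div_nonpos_of_nonpos_of_nonneg (by linarith [cos_le_one ⟪ν, z⟫]) (by positivity)

lemma abs_multiplierKernel_le (β : ℝ) (ν z : E) :
    |multiplierKernel β ν z| ≤ 2 * ‖z‖ ^ (-β) := by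
  rw [rpow_neg (norm_nonneg z), ← div_eq_mul_inv, multiplierKernel, abs_div,
    abs_of_nonneg (by positivity : (0:ℝ) ≤ ‖z‖ ^ β)]
  gcongr
  rw [abs_le]
  constructor <;> linarith [cos_le_one ⟪ν, z⟫, neg_one_le_cos ⟪ν, z⟫]

lemma abs_multiplierKernel_le_sq (β : ℝ) (ν z : E) :
    |multiplierKernel β ν z| ≤ ‖ν‖ ^ 2 / 2 * ‖z‖ ^ (-(β - 2)) := by
  rcases eq_or_ne z 0 with rfl | hz
  · simp only [multiplierKernel, inner_zero_right, cos_zero, sub_self, zero_div, abs_zero]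
    positivity
  have hz0 : 0 < ‖z‖ := norm_pos_iff.2 hz
  have hcos : |cos ⟪ν, z⟫ - 1| ≤ ‖ν‖ ^ 2 / 2 * ‖z‖ ^ 2 := by
    have hcs : ⟪ν, z⟫ ^ 2 ≤ (‖ν‖ * ‖z‖) ^ 2 := by
      rw [← sq_abs]; gcongr; exact abs_real_inner_le_norm ν z
    rw [abs_of_nonpos (by linarith [cos_le_one ⟪ν, z⟫])]
    nlinarith [one_sub_sq_div_two_le_cos (x := ⟪ν, z⟫)]
  rw [multiplierKernel, abs_div, abs_of_pos (rpow_pos_of_pos hz0 β), neg_sub, rpow_sub hz0,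
    rpow_two, div_le_iff₀ (rpow_pos_of_pos hz0 β)]
  calc _ ≤ ‖ν‖ ^ 2 / 2 * ‖z‖ ^ 2 := hcos
    _ = _ := by field_simp

lemma multiplierKernel_smul_right {r : ℝ} (hr : 0 < r) (ν z : E) :
    multiplierKernel β ν (r • z) = (r ^ β)⁻¹ * multiplierKernel β (r • ν) z := by
  rw [multiplierKernel, multiplierKernel, norm_smul, norm_of_nonneg hr.le,
    mul_rpow hr.le (norm_nonneg z), real_inner_smul_right, real_inner_smul_left,
    div_mul_eq_div_div_swap, div_eq_inv_mul]

lemma multiplierKernel_linearIsometryEquiv (f : E ≃ₗᵢ[ℝ] E) (ν z : E) :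
    multiplierKernel β (f ν) (f z) = multiplierKernel β ν z := by
  simp only [multiplierKernel, f.inner_map_map, f.norm_map]

lemma integral_multiplierKernel_neg [MeasurableSpace E] {μ : Measure E} [μ.IsOpenPosMeasure]
    {ν : E} (hν : ν ≠ 0) (hint : Integrable (multiplierKernel β ν) μ) :
    ∫ z, multiplierKernel β ν z ∂μ < 0 := by
  set U := {z : E | cos ⟪ν, z⟫ < 1}
  have hU : IsOpen U := isOpen_lt (continuous_cos.comp (continuous_const.inner continuous_id))
    continuous_const
  have hUne : U.Nonempty := ⟨(π / ‖ν‖ ^ 2) • ν, by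
    simp [U, real_inner_smul_right, hν]⟩
  have hUsupp : U ⊆ Function.support fun z ↦ -multiplierKernel β ν z := by
    intro z (hz : cos ⟪ν, z⟫ < 1)
    have hz0 : z ≠ 0 := by rintro rfl; simp at hz
    simp only [Function.mem_support, multiplierKernel, neg_ne_zero]
    exact div_ne_zero (by linarith) (rpow_pos_of_pos (norm_pos_iff.2 hz0) β).ne'
  rw [← neg_pos, ← integral_neg, integral_pos_iff_support_of_nonneg
    (fun z ↦ neg_nonneg.2 (multiplierKernel_nonpos β ν z)) hint.neg]
  exact (hU.measure_pos μ hUne).trans_le (measure_mono hUsupp)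

lemma setIntegral_ball_multiplierKernel_eq_of_norm_eq [FiniteDimensional ℝ E] [MeasurableSpace E]
    [BorelSpace E] {ν ν' : E} (h : ‖ν‖ = ‖ν'‖) (R : ℝ) :
    ∫ z in ball 0 R, multiplierKernel β ν z = ∫ z in ball 0 R, multiplierKernel β ν' z := by
  set f := Submodule.reflection (ℝ ∙ (ν - ν'))ᗮ
  calc ∫ z in ball 0 R, multiplierKernel β ν z
      = ∫ z in ball 0 R, multiplierKernel β (f ν) (f z) := by
        simp only [multiplierKernel_linearIsometryEquiv]
    _ = ∫ z in ball 0 R, multiplierKernel β ν' z := by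
        rw [Submodule.reflection_sub h, setIntegral_ball_comp_linearIsometryEquiv f]

section AddHaar

variable [FiniteDimensional ℝ E] [MeasurableSpace E] [BorelSpace E]
  {μ : Measure E} [μ.IsAddHaarMeasure]

lemma setIntegral_ball_multiplierKernel_eq_rpow_mul {r : ℝ} (hr : 0 < r) (ν : E) (δ : ℝ) :
    ∫ z in ball 0 δ, multiplierKernel β ν z ∂μ =
      r ^ (β - finrank ℝ E) * ∫ z in ball 0 (r * δ), multiplierKernel β (r⁻¹ • ν) z ∂μ := by
  have h := Measure.setIntegral_comp_smul_of_pos μ (multiplierKernel β (r⁻¹ • ν)) (ball 0 δ) hr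
  simp only [multiplierKernel_smul_right hr, smul_inv_smul₀ hr.ne', integral_const_mul,
    _root_.smul_ball hr.ne', smul_zero, norm_of_nonneg hr.le, smul_eq_mul] at h
  rw [rpow_sub hr, rpow_natCast, div_eq_mul_inv, mul_assoc, ← h, ← mul_assoc,
    mul_inv_cancel₀ (rpow_pos_of_pos hr β).ne', one_mul]

lemma integrable_multiplierKernel (hd : 1 ≤ finrank ℝ E)
    (hβ₁ : finrank ℝ E < β) (hβ₂ : β < finrank ℝ E + 2) (ν : E) :
    Integrable (multiplierKernel β ν) μ := by
  have h_meas := (measurable_multiplierKernel β ν).aestronglyMeasurable (μ := μ)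
  rw [← integrableOn_univ, ← union_compl_self (ball (0 : E) 1)]
  exact (integrableOn_ball_of_norm_le_rpow hd (by linarith)
      (ae_of_all _ (abs_multiplierKernel_le_sq β ν)) h_meas).union
    (integrableOn_compl_ball_of_norm_le_rpow one_pos hβ₁
      (ae_of_all _ (abs_multiplierKernel_le β ν)) h_meas)

lemma abs_setIntegral_ball_multiplierKernel_le (hd : 1 ≤ finrank ℝ E)
    (hβ : β < finrank ℝ E) (ν : E) (δ : ℝ) :
    |∫ z in ball 0 δ, multiplierKernel β ν z ∂μ| ≤ ∫ z in ball 0 δ, 2 * ‖z‖ ^ (-β) ∂μ := by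
  have h_bound : IntegrableOn (fun z : E ↦ 2 * ‖z‖ ^ (-β)) (ball 0 δ) μ :=
    integrableOn_ball_of_norm_le_rpow hd hβ
      (ae_of_all _ fun z ↦ by rw [norm_of_nonneg (by positivity)])
      ((measurable_norm.pow_const _).const_mul 2).aestronglyMeasurable
  simpa only [Real.norm_eq_abs] using norm_integral_le_of_norm_le (f := multiplierKernel β ν)
    h_bound (ae_of_all _ (abs_multiplierKernel_le β ν))

end AddHaar

lemma tendsto_setIntegral_ball_multiplierKernel_div_rpow [FiniteDimensional ℝ E]
    [MeasurableSpace E] [BorelSpace E] (hd : 1 ≤ finrank ℝ E)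
    (hβ₁ : finrank ℝ E < β) (hβ₂ : β < finrank ℝ E + 2) {δ : ℝ} (hδ : 0 < δ)
    {e : E} (he : ‖e‖ = 1) :
    Tendsto (fun ν : E ↦ (∫ z in ball 0 δ, multiplierKernel β ν z) / ‖ν‖ ^ (β - finrank ℝ E))
      (comap norm atTop) (𝓝 (∫ z, multiplierKernel β e z)) := by
  have hradius : Tendsto (fun ν : E ↦ ‖ν‖ * δ) (comap norm atTop) atTop :=
    tendsto_comap.atTop_mul_const hδ
  refine ((tendsto_setIntegral_ball_atTop 0
    (integrable_multiplierKernel hd hβ₁ hβ₂ e)).comp hradius).congr' ?_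
  filter_upwards [tendsto_comap.eventually (eventually_gt_atTop 0)] with ν hν
  have hunit : ‖‖ν‖⁻¹ • ν‖ = ‖e‖ := by
    rw [he, norm_smul, norm_inv, norm_norm, inv_mul_cancel₀ hν.ne']
  rw [Function.comp_apply, setIntegral_ball_multiplierKernel_eq_rpow_mul hν ν δ,
    setIntegral_ball_multiplierKernel_eq_of_norm_eq hunit, mul_div_cancel_left₀ _
      (rpow_pos_of_pos hν _).ne']

end Kernel

/-- Asymptotics of the Fourier multiplier: for `n < β < n+2`,
`|m^{δ,β}(ν)| ~ C ‖ν‖^{β−n}` as `‖ν‖ → ∞` for some constant `C = C(n,β,δ) > 0`,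
whereas for `β < n` the multiplier remains bounded. -/
theorem nonlocal_multiplier_asymptotics (n : ℕ) (hn : 1 ≤ n) (δ β : ℝ)
    (hδ : 0 < δ) (hβ : β < n + 2) :
    ((n : ℝ) < β →
      ∃ C > 0, Tendsto
        (fun ν : EuclideanSpace ℝ (Fin n) =>
          |nonlocalMultiplierFn n δ β ν| / ‖ν‖ ^ (β - n))
        (Filter.comap norm Filter.atTop) (𝓝 C)) ∧
    (β < n →
      ∃ M : ℝ, ∀ ν : EuclideanSpace ℝ (Fin n), |nonlocalMultiplierFn n δ β ν| ≤ M) := by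
  have hdim : finrank ℝ (EuclideanSpace ℝ (Fin n)) = n := finrank_euclideanSpace_fin
  set c := 2 * (n + 2 - β) * Gamma ((n : ℝ) / 2 + 1) /
    (π ^ ((n : ℝ) / 2) * δ ^ ((n : ℝ) + 2 - β))
  have hc : 0 < c := div_pos (mul_pos (mul_pos two_pos (by linarith))
    (Gamma_pos_of_pos (by positivity))) (by positivity)
  have hm (ν) : nonlocalMultiplierFn n δ β ν = c * ∫ z in ball 0 δ, multiplierKernel β ν z := rfl
  have : Nonempty (Fin n) := ⟨⟨0, hn⟩⟩
  obtain ⟨e, he⟩ := exists_norm_eq (EuclideanSpace ℝ (Fin n)) zero_le_one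
  rw [← hdim] at hn hβ
  refine ⟨fun hnβ ↦ ?_, fun hβn ↦ ?_⟩
  · rw [← hdim] at hnβ
    have hlim := tendsto_setIntegral_ball_multiplierKernel_div_rpow hn hnβ hβ hδ he
    have hneg := integral_multiplierKernel_neg (μ := volume)
      (norm_ne_zero_iff.1 (he.symm ▸ one_ne_zero)) (integrable_multiplierKernel hn hnβ hβ e)
    rw [hdim] at hlim
    refine ⟨c * |∫ z, multiplierKernel β e z|, mul_pos hc (abs_pos.2 hneg.ne), ?_⟩
    refine (hlim.abs.const_mul c).congr fun ν ↦ ?_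
    rw [hm, abs_mul, abs_of_pos hc, abs_div, abs_of_nonneg (rpow_nonneg (norm_nonneg ν) _),
      mul_div_assoc]
  · rw [← hdim] at hβn
    refine ⟨c * ∫ z : EuclideanSpace ℝ (Fin n) in ball 0 δ, 2 * ‖z‖ ^ (-β), fun ν ↦ ?_⟩
    rw [hm, abs_mul, abs_of_pos hc]
    exact mul_le_mul_of_nonneg_left
      (abs_setIntegral_ball_multiplierKernel_le hn hβn ν δ) hc.le
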